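/- arXiv:math/0210423 — 2 statements merged into one kernel-verified Lean document; each statement's English description precedes it below -/
import Mathlib

section
/- Let n be a positive integer and define, for l = 0,1,…,n, A_l = ((−1)^n/16) · (2n+1)!/((2l)!(2n−2l+1)!) · (binom(t−1,n)|_{t=−l+n/2+3/4})², where binom(t−1,n) = (t−1)(t−2)⋯(t−n)/n!. Then 2^{6n+4} · A_l ∈ ℤ for all l. -/
open Finset

/-- `(descPochhammer ℤ n).eval (c-1) = (c-1)(c-2)⋯(c-n)`. -/
lemma descPoch_eval_prod (n : ℕ) (c : ℤ) :
    (descPochhammer ℤ n).eval (c - 1) = ∏ j ∈ Icc 1 n, (c - j) := by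
  induction n with
  | zero => simp
  | succ n ih =>
    rw [descPochhammer_succ_eval, ih, Finset.prod_Icc_succ_top (by omega)]
    push_cast; ring

/-- `n!` divides a product of `n` consecutive integers. -/
lemma fact_dvd_prod_consec (n : ℕ) (c : ℤ) :
    (n.factorial : ℤ) ∣ ∏ j ∈ Icc 1 n, (c - j) := by
  rw [← descPoch_eval_prod]
  have h := Ring.descPochhammer_eq_factorial_smul_choose (R := ℤ) (c - 1) n
  rw [Polynomial.eval_eq_smeval, h]
  exact Dvd.intro _ (by rw [nsmul_eq_mul])

/-- Key divisibility: for odd `a`, `n! ∣ 2^n ∏_{j=1}^n (a - 4j)`. -/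
lemma key_dvd (n : ℕ) (a : ℤ) (ha : Odd a) :
    (n.factorial : ℤ) ∣ 2 ^ n * ∏ j ∈ Icc 1 n, (a - 4 * j) := by
  set v := (n.factorial).factorization 2 with hv
  set N := ordCompl[2] n.factorial with hNdef
  have hfne : n.factorial ≠ 0 := n.factorial_ne_zero
  have hNodd : ¬ (2 : ℕ) ∣ N := Nat.not_dvd_ordCompl Nat.prime_two hfne
  have hsplit : 2 ^ v * N = n.factorial := Nat.ordProj_mul_ordCompl_eq_self _ 2
  have hNpos : 0 < N := Nat.ordCompl_pos 2 hfne
  -- v ≤ n by Legendre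
  have hvle : v ≤ n := by
    have hLeg := sub_one_mul_padicValNat_factorial (p := 2) n
    have hfac : v = padicValNat 2 (n.factorial) := by
      rw [hv, Nat.factorization_def _ Nat.prime_two]
    omega
  -- N is coprime to 4
  have hcop : Nat.Coprime 4 N := by
    have h2 : Nat.Coprime 2 N := (Nat.Prime.coprime_iff_not_dvd Nat.prime_two).2 hNodd
    exact Nat.Coprime.pow_left 2 h2
  have hcopZ : IsCoprime (4 : ℤ) (N : ℤ) := by
    have := Nat.Coprime.isCoprime (m := 4) (n := N) hcop
    exact_mod_cast this
  obtain ⟨u, w, huw⟩ := hcopZ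
  -- c with 4c ≡ a mod N
  set c : ℤ := u * a with hc
  have hac : (N : ℤ) ∣ a - 4 * c := by
    refine ⟨w * a, ?_⟩
    have : a * (u * 4 + w * N) = a * 1 := by rw [huw]
    nlinarith [this]
  -- show N ∣ product
  have hNzero : NeZero N := ⟨hNpos.ne'⟩
  have hNdvdfact : (N : ℤ) ∣ (n.factorial : ℤ) := by
    exact_mod_cast Int.natCast_dvd_natCast.mpr (Nat.ordCompl_dvd n.factorial 2)
  have hNP : (N : ℤ) ∣ ∏ j ∈ Icc 1 n, (a - 4 * j) := by
    rw [← ZMod.intCast_zmod_eq_zero_iff_dvd]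
    push_cast
    have ha4c : ((a : ℤ) : ZMod N) = 4 * (c : ZMod N) := by
      have := (ZMod.intCast_zmod_eq_zero_iff_dvd (a - 4 * c) N).2 hac
      push_cast at this
      linear_combination this
    calc (∏ j ∈ Icc 1 n, ((a : ZMod N) - 4 * (j : ℕ)))
        = ∏ j ∈ Icc 1 n, (4 * (((c : ℤ) : ZMod N) - (j : ℕ))) := by
          refine Finset.prod_congr rfl fun j hj => ?_
          rw [ha4c]; ring
      _ = 4 ^ n * ∏ j ∈ Icc 1 n, (((c : ℤ) : ZMod N) - (j : ℕ)) := by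
          rw [Finset.prod_mul_distrib, Finset.prod_const, Nat.card_Icc]
          norm_num
      _ = 0 := by
          have hdvd : (N : ℤ) ∣ ∏ j ∈ Icc 1 n, (c - (j : ℕ)) :=
            dvd_trans hNdvdfact (fact_dvd_prod_consec n c)
          have := (ZMod.intCast_zmod_eq_zero_iff_dvd (∏ j ∈ Icc 1 n, (c - (j : ℕ))) N).2 hdvd
          push_cast at this
          rw [this, mul_zero]
  -- combine: n! = 2^v * N ∣ 2^n * P
  calc (n.factorial : ℤ) = (2 : ℤ) ^ v * N := by exact_mod_cast hsplit.symm
    _ ∣ 2 ^ n * ∏ j ∈ Icc 1 n, (a - 4 * j) :=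
        mul_dvd_mul (pow_dvd_pow 2 hvle) hNP

/-- `2^{6n+4} A_l ∈ ℤ` where
`A_l = ((−1)^n/16) · (2n+1)!/((2l)!(2n−2l+1)!) · (binom(t−1,n)|_{t=−l+n/2+3/4})²`. -/
theorem A_l_denominator (n : ℕ) (hn : 0 < n) (l : ℕ) (hl : l ≤ n) :
    ∃ k : ℤ, (2 : ℚ) ^ (6 * n + 4)
        * (((-1 : ℚ) ^ n / 16)
            * ((2 * n + 1).factorial / ((2 * l).factorial * (2 * n - 2 * l + 1).factorial))
            * ((∏ j ∈ Finset.Icc 1 n, ((-(l : ℚ) + n / 2 + 3 / 4) - j)) / n.factorial) ^ 2)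
      = k := by
  have haodd : Odd (2 * (n : ℤ) + 3 - 4 * l) := ⟨(n : ℤ) + 1 - 2 * l, by ring⟩
  obtain ⟨Q, hQ⟩ := key_dvd n (2 * (n : ℤ) + 3 - 4 * l) haodd
  -- the rational product equals P / 4^n
  have hprod : (∏ j ∈ Finset.Icc 1 n, ((-(l : ℚ) + n / 2 + 3 / 4) - j))
      = ((∏ j ∈ Icc 1 n, (2 * (n : ℤ) + 3 - 4 * l - 4 * j) : ℤ) : ℚ) / 4 ^ n := by
    rw [eq_div_iff (by positivity)]
    rw [show (4 : ℚ) ^ n = ∏ _j ∈ Icc 1 n, (4 : ℚ) by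
      rw [Finset.prod_const, Nat.card_Icc]; norm_num]
    rw [← Finset.prod_mul_distrib]
    push_cast
    exact Finset.prod_congr rfl fun j hj => by push_cast; ring
  -- binomial coefficient
  have hC : ((2 * l).factorial : ℚ) * ((2 * n - 2 * l + 1).factorial : ℚ)
      * ((2 * n + 1).choose (2 * l) : ℚ) = ((2 * n + 1).factorial : ℚ) := by
    have h1 : 2 * l ≤ 2 * n + 1 := by omega
    have h2 : 2 * n + 1 - 2 * l = 2 * n - 2 * l + 1 := by omega
    have := Nat.choose_mul_factorial_mul_factorial h1
    rw [h2] at this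
    exact_mod_cast by rw [← this]; ring
  refine ⟨(-1) ^ n * ((2 * n + 1).choose (2 * l)) * Q ^ 2, ?_⟩
  have hQℚ : (2 : ℚ) ^ n * ((∏ j ∈ Icc 1 n, (2 * (n : ℤ) + 3 - 4 * l - 4 * j) : ℤ) : ℚ)
      = (n.factorial : ℚ) * (Q : ℚ) := by
    exact_mod_cast congrArg (Int.cast : ℤ → ℚ) hQ
  have hfl : ((2 * l).factorial : ℚ) ≠ 0 := by positivity
  have hfnl : ((2 * n - 2 * l + 1).factorial : ℚ) ≠ 0 := by positivity
  have hfn : ((n.factorial : ℚ)) ≠ 0 := by positivity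
  have h2n : (2 : ℚ) ^ n ≠ 0 := by positivity
  have hP : ((∏ j ∈ Icc 1 n, (2 * (n : ℤ) + 3 - 4 * l - 4 * j) : ℤ) : ℚ)
      = (n.factorial : ℚ) * Q / 2 ^ n := by
    rw [eq_div_iff h2n]
    linarith [hQℚ]
  have h4 : (4 : ℚ) ^ n = 2 ^ (2 * n) := by rw [pow_mul]; norm_num
  rw [hprod, hP, h4, ← hC]
  push_cast
  field_simp
  ring
end

section
/- The permutations 𝔞₁ = (c₁₁ c₃₁)(c₁₂ c₃₂)(c₁₃ c₃₃), 𝔞₂ = (c₂₁ c₃₁)(c₂₂ c₃₂)(c₂₃ c₃₃), 𝔟 = (c₁₂ c₁₃)(c₂₂ c₂₃)(c₃₂ c₃₃), and 𝔥 = (c₀₀ c₂₂)(c₁₁ c₃₃)(c₁₃ c₃₁), acting on the 10-element set {c₀₀, c₁₁, c₁₂, c₁₃, c₂₁, c₂₂, c₂₃, c₃₁, c₃₂, c₃₃}, generate a subgroup of S₁₀ of order exactly 120. -/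
open Equiv

private def wgens : Fin 4 → Perm (Fin 10) :=
  ![swap (1 : Fin 10) 7 * swap 2 8 * swap 3 9,
    swap 4 7 * swap 5 8 * swap 6 9,
    swap 2 3 * swap 5 6 * swap 8 9,
    swap 0 5 * swap 1 9 * swap 3 7]

private def wW : List (List (Fin 4)) := [[], [0], [1], [2], [3], [0,1], [1,0], [1,3], [2,0], [2,1], [2,3], [3,0], [3,1], [3,2], [0,1,0], [0,1,3], [1,3,0], [1,3,1], [1,3,2], [2,0,1], [2,1,0], [2,1,3], [2,3,0], [2,3,1], [2,3,2], [3,0,1], [3,1,0], [3,2,0], [3,2,1], [0,1,3,0], [0,1,3,1], [0,1,3,2], [1,3,0,1], [1,3,1,0], [1,3,2,0], [1,3,2,1], [2,0,1,0], [2,0,1,3], [2,1,3,0], [2,1,3,1], [2,1,3,2], [2,3,0,1], [2,3,1,0], [2,3,2,0], [2,3,2,1], [3,0,1,0], [3,2,0,1], [3,2,1,0], [3,2,1,3], [0,1,3,0,1], [0,1,3,1,0], [0,1,3,2,0], [0,1,3,2,1], [1,3,0,1,0], [1,3,2,0,1], [1,3,2,1,0], [2,0,1,3,0], [2,0,1,3,1],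 [2,0,1,3,2], [2,1,3,0,1], [2,1,3,1,0], [2,1,3,2,0], [2,1,3,2,1], [2,3,0,1,0], [2,3,2,0,1], [2,3,2,1,0], [3,2,0,1,0], [3,2,0,1,3], [3,2,1,3,0], [3,2,1,3,1], [3,2,1,3,2], [0,1,3,0,1,0], [0,1,3,2,0,1], [0,1,3,2,1,0], [1,3,2,0,1,0], [1,3,2,0,1,3], [2,0,1,3,0,1], [2,0,1,3,1,0], [2,0,1,3,2,0], [2,0,1,3,2,1], [2,1,3,0,1,0], [2,1,3,2,0,1], [2,1,3,2,1,0], [2,3,2,0,1,0], [3,2,0,1,3,0], [3,2,0,1,3,1], [3,2,0,1,3,2], [3,2,1,3,0,1], [3,2,1,3,1,0], [3,2,1,3,2,0], [3,2,1,3,2,1], [0,1,3,2,0,1,0], [1,3,2,0,1,3,0], [1,3,2,0,1,3,1], [1,3,2,0,1,3,2], [2,0,1,3,0,1,0], [2,0,1,3,2,0,1], [2,0,1,3,2,1,0], [2,1,3,2,0,1,0], [3,2,0,1,3,0,1], [3,2,0,1,3,1,0], [3,2,0,1,3,2,0], [3,2,0,1,3,2,1], [3,2,1,3,0,1,0], [3,2,1,3,2,0,1],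 [3,2,1,3,2,1,0], [1,3,2,0,1,3,0,1], [1,3,2,0,1,3,1,0], [1,3,2,0,1,3,2,0], [1,3,2,0,1,3,2,1], [2,0,1,3,2,0,1,0], [3,2,0,1,3,0,1,0], [3,2,0,1,3,2,0,1], [3,2,0,1,3,2,1,0], [3,2,1,3,2,0,1,0], [1,3,2,0,1,3,0,1,0], [1,3,2,0,1,3,2,0,1], [1,3,2,0,1,3,2,1,0], [3,2,0,1,3,2,0,1,0], [1,3,2,0,1,3,2,0,1,0]]

private def wL : List (Perm (Fin 10)) := wW.map (fun w => (w.map wgens).prod)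

private def toL (f : Fin 10 → Fin 10) : List Nat :=
  (List.finRange 10).map (fun x => (f x : Nat))

private def compL (f g : List Nat) : List Nat := g.map (fun i => f.getD i 0)

private def gvec : Fin 4 → List Nat :=
  ![[0,7,8,9,4,5,6,1,2,3],
  [0,1,2,3,7,8,9,4,5,6],
  [0,1,3,2,4,6,5,7,9,8],
  [5,9,2,7,4,0,6,3,8,1]]

private def vecs : List (List Nat) :=
  [[0,1,2,3,4,5,6,7,8,9],
  [0,7,8,9,4,5,6,1,2,3],
  [0,1,2,3,7,8,9,4,5,6],
  [0,1,3,2,4,6,5,7,9,8],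
  [5,9,2,7,4,0,6,3,8,1],
  [0,7,8,9,1,2,3,4,5,6],
  [0,4,5,6,7,8,9,1,2,3],
  [8,6,2,4,7,0,9,3,5,1],
  [0,7,9,8,4,6,5,1,3,2],
  [0,1,3,2,7,9,8,4,6,5],
  [6,8,3,7,4,0,5,2,9,1],
  [5,3,8,1,4,0,6,9,2,7],
  [5,9,2,7,3,8,1,4,0,6],
  [5,9,7,2,4,6,0,3,1,8],
  [0,4,5,6,1,2,3,7,8,9],
  [2,6,8,4,1,0,3,9,5,7],
  [8,3,5,1,7,0,9,6,2,4],
  [8,6,2,4,3,5,1,7,0,9],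
  [8,6,4,2,7,9,0,3,1,5],
  [0,7,9,8,1,3,2,4,6,5],
  [0,4,6,5,7,9,8,1,3,2],
  [9,5,3,4,7,0,8,2,6,1],
  [6,2,9,1,4,0,5,8,3,7],
  [6,8,3,7,2,9,1,4,0,5],
  [6,8,7,3,4,5,0,2,1,9],
  [5,3,8,1,9,2,7,4,0,6],
  [5,4,0,6,3,8,1,9,2,7],
  [5,3,1,8,4,6,0,9,7,2],
  [5,9,7,2,3,1,8,4,6,0],
  [2,9,5,7,1,0,3,6,8,4],
  [2,6,8,4,9,5,7,1,0,3],
  [2,6,4,8,1,3,0,9,7,5],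
  [8,3,5,1,6,2,4,7,0,9],
  [8,7,0,9,3,5,1,6,2,4],
  [8,3,1,5,7,9,0,6,4,2],
  [8,6,4,2,3,1,5,7,9,0],
  [0,4,6,5,1,3,2,7,9,8],
  [3,5,9,4,1,0,2,8,6,7],
  [9,2,6,1,7,0,8,5,3,4],
  [9,5,3,4,2,6,1,7,0,8],
  [9,5,4,3,7,8,0,2,1,6],
  [6,2,9,1,8,3,7,4,0,5],
  [6,4,0,5,2,9,1,8,3,7],
  [6,2,1,9,4,5,0,8,7,3],
  [6,8,7,3,2,1,9,4,5,0],
  [5,4,0,6,9,2,7,3,8,1],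
  [5,3,1,8,9,7,2,4,6,0],
  [5,4,6,0,3,1,8,9,7,2],
  [1,0,7,4,3,5,8,2,6,9],
  [2,9,5,7,6,8,4,1,0,3],
  [2,1,0,3,9,5,7,6,8,4],
  [2,9,7,5,1,3,0,6,4,8],
  [2,6,4,8,9,7,5,1,3,0],
  [8,7,0,9,6,2,4,3,5,1],
  [8,3,1,5,6,4,2,7,9,0],
  [8,7,9,0,3,1,5,6,4,2],
  [3,8,6,7,1,0,2,5,9,4],
  [3,5,9,4,8,6,7,1,0,2],
  [3,5,4,9,1,2,0,8,7,6],
  [9,2,6,1,5,3,4,7,0,8],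
  [9,7,0,8,2,6,1,5,3,4],
  [9,2,1,6,7,8,0,5,4,3],
  [9,5,4,3,2,1,6,7,8,0],
  [6,4,0,5,8,3,7,2,9,1],
  [6,2,1,9,8,7,3,4,5,0],
  [6,4,5,0,2,1,9,8,7,3],
  [5,4,6,0,9,7,2,3,1,8],
  [7,0,1,4,9,5,2,8,6,3],
  [1,2,6,9,3,5,8,0,7,4],
  [1,0,7,4,2,6,9,3,5,8],
  [1,0,4,7,3,8,5,2,9,6],
  [2,1,0,3,6,8,4,9,5,7],
  [2,9,7,5,6,4,8,1,3,0],
  [2,1,3,0,9,7,5,6,4,8],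
  [8,7,9,0,6,4,2,3,1,5],
  [4,0,1,7,6,8,2,5,9,3],
  [3,8,6,7,5,9,4,1,0,2],
  [3,1,0,2,8,6,7,5,9,4],
  [3,8,7,6,1,2,0,5,4,9],
  [3,5,4,9,8,7,6,1,2,0],
  [9,7,0,8,5,3,4,2,6,1],
  [9,2,1,6,5,4,3,7,8,0],
  [9,7,8,0,2,1,6,5,4,3],
  [6,4,5,0,8,7,3,2,1,9],
  [7,8,6,3,9,5,2,0,1,4],
  [7,0,1,4,8,6,3,9,5,2],
  [7,0,4,1,9,2,5,8,3,6],
  [1,2,6,9,0,7,4,3,5,8],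
  [1,3,5,8,2,6,9,0,7,4],
  [1,2,9,6,3,8,5,0,4,7],
  [1,0,4,7,2,9,6,3,8,5],
  [2,1,3,0,6,4,8,9,7,5],
  [4,5,9,3,6,8,2,0,1,7],
  [4,0,1,7,5,9,3,6,8,2],
  [4,0,7,1,6,2,8,5,3,9],
  [3,1,0,2,5,9,4,8,6,7],
  [3,8,7,6,5,4,9,1,2,0],
  [3,1,2,0,8,7,6,5,4,9],
  [9,7,8,0,5,4,3,2,1,6],
  [7,8,6,3,0,1,4,9,5,2],
  [7,9,5,2,8,6,3,0,1,4],
  [7,8,3,6,9,2,5,0,4,1],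
  [7,0,4,1,8,3,6,9,2,5],
  [1,3,5,8,0,7,4,2,6,9],
  [1,2,9,6,0,4,7,3,8,5],
  [1,3,8,5,2,9,6,0,4,7],
  [4,5,9,3,0,1,7,6,8,2],
  [4,6,8,2,5,9,3,0,1,7],
  [4,5,3,9,6,2,8,0,7,1],
  [4,0,7,1,5,3,9,6,2,8],
  [3,1,2,0,5,4,9,8,7,6],
  [7,9,5,2,0,1,4,8,6,3],
  [7,8,3,6,0,4,1,9,2,5],
  [7,9,2,5,8,3,6,0,4,1],
  [1,3,8,5,0,4,7,2,9,6],
  [4,6,8,2,0,1,7,5,9,3],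
  [4,5,3,9,0,7,1,6,2,8],
  [4,6,2,8,5,3,9,0,7,1],
  [7,9,2,5,0,4,1,8,3,6],
  [4,6,2,8,0,7,1,5,3,9]]



private def pToL (e : Perm (Fin 10)) : List Nat := toL ⇑e


set_option maxRecDepth 8000 in
private lemma hmap : wL.map pToL = vecs := by decide

set_option maxRecDepth 8000 in
private lemma hvstep : ∀ i : Fin 4, ∀ v ∈ vecs, compL (gvec i) v ∈ vecs := by decide

set_option maxRecDepth 8000 in
private lemma hnodup : vecs.Nodup := by decide

set_option maxRecDepth 8000 in
private lemma hkey : ∀ i : Fin 4, ∀ j : Fin 10,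
    (gvec i).getD (j : Nat) 0 = ((wgens i) j : Nat) := by decide

private lemma hlen : wL.length = 120 := by decide

private lemma hcomp (i : Fin 4) (g : Fin 10 → Fin 10) :
    compL (gvec i) (toL g) = toL (⇑(wgens i) ∘ g) := by
  unfold compL toL
  rw [List.map_map]
  refine List.map_congr_left ?_
  intro x _
  exact hkey i (g x)

private lemma hinj : Function.Injective pToL := by
  intro x y h
  simp only [pToL, toL] at h
  apply Equiv.coe_fn_injective
  funext j
  have h2 := List.map_inj_left.mp h j (List.mem_finRange j)
  exact Fin.val_injective h2

private lemma memL_iff {x : Perm (Fin 10)} : x ∈ wL ↔ pToL x ∈ vecs := by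
  rw [← hmap]
  constructor
  · exact fun h => List.mem_map_of_mem h
  · intro hx
    obtain ⟨z, hz, hzx⟩ := List.mem_map.mp hx
    rwa [← hinj hzx]

private lemma wstep : ∀ i : Fin 4, ∀ y ∈ wL, wgens i * y ∈ wL := by
  intro i y hy
  rw [memL_iff] at hy ⊢
  have h1 : pToL (wgens i * y) = compL (gvec i) (pToL y) := by
    show toL _ = _
    rw [Equiv.Perm.coe_mul, ← hcomp i ⇑y]
    rfl
  rw [h1]
  exact hvstep i _ hy

set_option maxRecDepth 8000 in
private lemma wsq0 : ∀ i : Fin 4, pToL (wgens i * wgens i) = pToL 1 := by decide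

private lemma wsq' : ∀ i : Fin 4, wgens i * wgens i = 1 :=
  fun i => hinj (wsq0 i)

private lemma hone : (1 : Perm (Fin 10)) ∈ wL := by
  rw [memL_iff]
  decide

/-- Indices: 0=c₀₀, 1=c₁₁, 2=c₁₂, 3=c₁₃, 4=c₂₁, 5=c₂₂, 6=c₂₃, 7=c₃₁, 8=c₃₂, 9=c₃₃.
The four permutations (22) generate a subgroup of `S₁₀` of order 120. -/
theorem whipple_group_order :
    Nat.card (Subgroup.closure
      ({ swap (1 : Fin 10) 7 * swap 2 8 * swap 3 9,
         swap 4 7 * swap 5 8 * swap 6 9,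
         swap 2 3 * swap 5 6 * swap 8 9,
         swap 0 5 * swap 1 9 * swap 3 7 } : Set (Perm (Fin 10)))) = 120 := by
  set S : Set (Perm (Fin 10)) :=
      { swap (1 : Fin 10) 7 * swap 2 8 * swap 3 9,
         swap 4 7 * swap 5 8 * swap 6 9,
         swap 2 3 * swap 5 6 * swap 8 9,
         swap 0 5 * swap 1 9 * swap 3 7 } with hS
  have hgen : ∀ i : Fin 4, wgens i ∈ S := by
    intro i
    fin_cases i <;> simp [wgens, hS]
  have hSgens : ∀ x ∈ S, ∃ i : Fin 4, wgens i = x := by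
    intro x hx
    rw [hS] at hx
    rcases hx with h | h | h | h
    · exact ⟨0, h.symm⟩
    · exact ⟨1, h.symm⟩
    · exact ⟨2, h.symm⟩
    · exact ⟨3, h.symm⟩
  have hset : ((Subgroup.closure S : Subgroup (Perm (Fin 10))) : Set (Perm (Fin 10)))
      = {x | x ∈ wL} := by
    ext x
    simp only [SetLike.mem_coe, Set.mem_setOf_eq]
    constructor
    · intro hx
      refine Subgroup.closure_induction_left (p := fun y _ => y ∈ wL) ?_ ?_ ?_ hx
      · exact hone
      · intro g hg y _ hy
        exact (hSgens g hg).choose_spec ▸ wstep (hSgens g hg).choose y hy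
      · intro g hg y _ hy
        obtain ⟨i, rfl⟩ := hSgens g hg
        rw [inv_eq_of_mul_eq_one_left (wsq' i)]
        exact wstep i y hy
    · intro hx
      simp only [wL, List.mem_map] at hx
      obtain ⟨w, _, rfl⟩ := hx
      refine Subgroup.list_prod_mem (K := Subgroup.closure S) ?_
      intro g hg
      simp only [List.mem_map] at hg
      obtain ⟨i, _, rfl⟩ := hg
      exact Subgroup.subset_closure (hgen i)
  have hLnodup : wL.Nodup := by
    have h := hnodup
    rw [← hmap] at h
    exact h.of_map _
  have h1 : Nat.card (Subgroup.closure S) = ({x | x ∈ wL} : Set (Perm (Fin 10))).ncard := by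
    rw [← hset]
    exact Nat.card_coe_set_eq _
  rw [h1]
  have h2 : ({x | x ∈ wL} : Set (Perm (Fin 10))) = ↑wL.toFinset := by
    ext x; simp
  rw [h2, Set.ncard_coe_finset, List.toFinset_card_of_nodup hLnodup, hlen]
end
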